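/- If t is a real number with t² a nonzero rational number, then cosh t is irrational. -/

import Mathlib

/-
Hermite's argument. For a real polynomial `p` put `P = ∑ᵢ p⁽²ⁱ⁾`, so that `P'' = P - p` and
`∫₀ᵗ p(x) sinh (t - x) dx = P(0) cosh t + P'(0) sinh t - P(t)`. Take `p(x) = G(x / t)` with
`G(y) = (y² (1 - y²))ⁿ`. As `G` is even, `P'(0) = 0`; as `G` vanishes to order `n` at `0` and `1`,
its derivatives there are `n!` times integers, and since `t² = q` only the even powers `t^(-2i)`
occur, so `den(q)^(2n) t^(4n) / n!` times the integral is `a cosh t - b` with `a, b ∈ ℤ`. This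
number lies in `(0, (den(q)² t⁴)ⁿ / n! · t sinh t]`, so it tends to `0` without vanishing, whereas
for `cosh t = u / v` its multiple by `v` would be a positive integer.
-/

open Polynomial Finset Real
open scoped Nat

namespace Polynomial

section SumEvenIDeriv

variable {R : Type*} [CommRing R]

noncomputable def sumEvenIDeriv (p : R[X]) : R[X] :=
  ∑ i ∈ range (p.natDegree + 1), derivative^[2 * i] p

theorem sumEvenIDeriv_eq_sum_range {p : R[X]} {N : ℕ} (hN : p.natDegree < 2 * (N + 1)) :
    sumEvenIDeriv p = ∑ i ∈ range (N + 1), derivative^[2 * i] p := by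
  have hzero : ∀ M, p.natDegree < 2 * (M + 1) →
      ∀ i ≥ M + 1, derivative^[2 * i] p = 0 :=
    fun M hM i hi => iterate_derivative_eq_zero (by omega)
  calc sumEvenIDeriv p = ∑ i ∈ range (p.natDegree + N + 2), derivative^[2 * i] p :=
        (eventually_constant_sum (hzero _ (by omega)) (by omega)).symm
    _ = _ := eventually_constant_sum (hzero N hN) (by omega)

theorem derivative_derivative_sumEvenIDeriv (p : R[X]) :
    derivative (derivative (sumEvenIDeriv p)) = sumEvenIDeriv p - p := by
  calc derivative (derivative (sumEvenIDeriv p))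
      = ∑ i ∈ range (p.natDegree + 1), derivative^[2 * (i + 1)] p := by
        simp only [sumEvenIDeriv, derivative_sum, ← Function.iterate_succ_apply' derivative,
          Nat.mul_succ]
    _ = ∑ i ∈ range (p.natDegree + 1 + 1), derivative^[2 * i] p - p := by
        rw [sum_range_succ' _ (p.natDegree + 1), mul_zero, Function.iterate_zero_apply,
          add_sub_cancel_right]
    _ = sumEvenIDeriv p - p := by rw [sumEvenIDeriv_eq_sum_range (N := p.natDegree + 1) (by omega)]

theorem eval_zero_derivative_sumEvenIDeriv {p : R[X]} (hp : ∀ k, Odd k → p.coeff k = 0) :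
    (derivative (sumEvenIDeriv p)).eval 0 = 0 := by
  rw [← coeff_zero_eq_eval_zero, coeff_derivative, sumEvenIDeriv, finsetSum_coeff]
  simp [coeff_iterate_derivative, hp _ (⟨_, add_comm _ _⟩ : Odd (1 + 2 * _))]

theorem iterate_derivative_comp_C_mul_X (p : R[X]) (c : R) (k : ℕ) :
    derivative^[k] (p.comp (C c * X)) = C (c ^ k) * (derivative^[k] p).comp (C c * X) := by
  induction k generalizing p with
  | zero => simp
  | succ k ih =>
    rw [Function.iterate_succ_apply', Function.iterate_succ_apply', ih, derivative_C_mul,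
      derivative_comp]
    simp only [derivative_mul, derivative_C, derivative_X, zero_mul, zero_add, mul_one, pow_succ,
      C_mul]
    ring

theorem pow_mul_eval_sumEvenIDeriv_comp_C_inv_mul_X {K : Type*} [Field K] {p : K[X]} {N : ℕ}
    (hp : p.natDegree ≤ 2 * N) {t : K} (ht : t ≠ 0) (y : K) :
    t ^ (2 * N) * (sumEvenIDeriv (p.comp (C t⁻¹ * X))).eval (t * y) =
      ∑ i ∈ range (N + 1), (t ^ 2) ^ (N - i) * (derivative^[2 * i] p).eval y := by
  have hdeg : (p.comp (C t⁻¹ * X)).natDegree < 2 * (N + 1) :=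
    calc _ ≤ p.natDegree * (C t⁻¹ * X).natDegree := natDegree_comp_le
      _ = p.natDegree := by rw [natDegree_C_mul_X _ (inv_ne_zero ht), mul_one]
      _ < 2 * (N + 1) := by omega
  rw [sumEvenIDeriv_eq_sum_range hdeg, eval_finsetSum, mul_sum]
  refine sum_congr rfl fun i hi => ?_
  have hiN : i ≤ N := Nat.lt_succ_iff.mp (mem_range.mp hi)
  rw [iterate_derivative_comp_C_mul_X, eval_mul, eval_C, eval_comp, eval_mul, eval_C, eval_X,
    inv_mul_cancel_left₀ ht, ← mul_assoc, inv_pow, ← pow_mul,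
    show 2 * N = 2 * (N - i) + 2 * i by omega, pow_add, mul_inv_cancel_right₀ (pow_ne_zero _ ht)]

end SumEvenIDeriv

theorem factorial_dvd_eval_iterate_derivative {R : Type*} [CommRing R] {p : R[X]} {r : R} {m : ℕ}
    (hp : (X - C r) ^ m ∣ p) (k : ℕ) : (m ! : R) ∣ (derivative^[k] p).eval r := by
  obtain ⟨p', hp'⟩ := hp
  rcases lt_or_ge k m with hk | hk
  · rw [← coe_aeval_eq_eval, aeval_iterate_derivative_of_lt p m r (by simpa using hp') hk]
    exact dvd_zero _
  · obtain ⟨g, -, hg⟩ := aeval_iterate_derivative_of_ge R p m hk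
    rw [← coe_aeval_eq_eval, hg r, nsmul_eq_mul]
    exact dvd_mul_right _ _

end Polynomial

theorem integral_eval_mul_sinh_sub (p : ℝ[X]) (t : ℝ) :
    ∫ x in (0 : ℝ)..t, p.eval x * sinh (t - x) =
      (sumEvenIDeriv p).eval 0 * cosh t + (derivative (sumEvenIDeriv p)).eval 0 * sinh t -
        (sumEvenIDeriv p).eval t := by
  set P := sumEvenIDeriv p
  have hderiv : ∀ x, HasDerivAt
      (fun y => -((derivative P).eval y * sinh (t - y)) - P.eval y * cosh (t - y))
      (p.eval x * sinh (t - x)) x := by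
    intro x
    have hsub : HasDerivAt (fun y : ℝ => t - y) (-1) x := (hasDerivAt_id x).const_sub t
    have hsinh := (hasDerivAt_sinh (t - x)).comp x hsub
    have hcosh := (hasDerivAt_cosh (t - x)).comp x hsub
    refine (((derivative P).hasDerivAt x).mul hsinh).neg.sub ((P.hasDerivAt x).mul hcosh)
      |>.congr_deriv ?_
    rw [derivative_derivative_sumEvenIDeriv, eval_sub, Function.comp_apply, Function.comp_apply]
    ring
  rw [intervalIntegral.integral_eq_sub_of_hasDerivAt (fun x _ => hderiv x)
    ((by fun_prop : Continuous fun x => p.eval x * sinh (t - x)).intervalIntegrable _ _)]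
  simp only [sub_self, sinh_zero, cosh_zero, sub_zero]
  ring

theorem exists_den_pow_mul_eval_sumEvenIDeriv_eq {G : ℤ[X]} {N m : ℕ} (hG : G.natDegree ≤ 2 * N)
    {r : ℤ} (hr : (X - C r) ^ m ∣ G) {q : ℚ} {t : ℝ} (ht : t ≠ 0) (htq : t ^ 2 = q) :
    ∃ z : ℤ, (q.den : ℝ) ^ N * t ^ (2 * N) *
      (sumEvenIDeriv ((G.map (Int.castRingHom ℝ)).comp (C t⁻¹ * X))).eval (t * r) = m ! * z := by
  choose z hz using fun i => factorial_dvd_eval_iterate_derivative hr (2 * i)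
  refine ⟨∑ i ∈ range (N + 1), q.num ^ (N - i) * q.den ^ i * z i, ?_⟩
  rw [mul_assoc, pow_mul_eval_sumEvenIDeriv_comp_C_inv_mul_X (natDegree_map_le.trans hG) ht,
    mul_sum, Int.cast_sum, mul_sum]
  refine sum_congr rfl fun i hi => ?_
  have hiN : i ≤ N := Nat.lt_succ_iff.mp (mem_range.mp hi)
  have hden : (q.den : ℝ) ^ N * (q : ℝ) ^ (N - i) = q.num ^ (N - i) * q.den ^ i := by
    have hnum : (q : ℝ) * q.den = q.num := by exact_mod_cast q.mul_den_eq_num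
    rw [← hnum, ← Nat.add_sub_cancel' hiN, Nat.add_sub_cancel_left]
    ring
  rw [iterate_derivative_map, eval_intCast_map, eq_intCast, Int.cast_id, hz, htq, ← mul_assoc, hden]
  push_cast
  ring

noncomputable def nivenPoly (R : Type*) [CommRing R] (n : ℕ) : R[X] := (X ^ 2 * (1 - X ^ 2)) ^ n

section NivenPoly

variable {R : Type*} [CommRing R] (n : ℕ)

@[simp]
theorem map_nivenPoly {S : Type*} [CommRing S] (f : R →+* S) :
    (nivenPoly R n).map f = nivenPoly S n := by
  simp [nivenPoly]

@[simp]
theorem eval_nivenPoly (y : R) : (nivenPoly R n).eval y = (y ^ 2 * (1 - y ^ 2)) ^ n := by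
  simp [nivenPoly]

theorem natDegree_nivenPoly_le : (nivenPoly R n).natDegree ≤ 2 * (2 * n) := by
  unfold nivenPoly
  compute_degree
  omega

theorem coeff_nivenPoly_of_odd {k : ℕ} (hk : Odd k) : (nivenPoly R n).coeff k = 0 := by
  have : nivenPoly R n = expand R 2 ((X * (1 - X)) ^ n) := by simp [nivenPoly]
  rw [this, coeff_expand two_pos, if_neg (Nat.two_dvd_ne_zero.mpr (Nat.odd_iff.mp hk))]

theorem X_sub_C_pow_dvd_nivenPoly {r : R} (hr : r ^ 2 * (1 - r ^ 2) = 0) :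
    (X - C r) ^ n ∣ nivenPoly R n :=
  pow_dvd_pow_of_dvd (dvd_iff_isRoot.mpr (by simp [hr])) n

end NivenPoly

theorem integral_nivenPoly_comp_mul_sinh_mem_Ioc {t : ℝ} (ht : 0 < t) (n : ℕ) :
    ∫ x in (0 : ℝ)..t, ((nivenPoly ℝ n).comp (C t⁻¹ * X)).eval x * sinh (t - x) ∈
      Set.Ioc 0 (t * sinh t) := by
  have hcont : Continuous fun x => ((nivenPoly ℝ n).comp (C t⁻¹ * X)).eval x * sinh (t - x) := by
    fun_prop
  have heval (x : ℝ) : ((nivenPoly ℝ n).comp (C t⁻¹ * X)).eval x =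
      ((t⁻¹ * x) ^ 2 * (1 - (t⁻¹ * x) ^ 2)) ^ n := by
    simp
  have hy {x : ℝ} (h0 : 0 ≤ x) (hxt : x ≤ t) : 0 ≤ t⁻¹ * x ∧ t⁻¹ * x ≤ 1 :=
    ⟨by positivity, by rwa [inv_mul_le_one₀ ht]⟩
  constructor
  · refine intervalIntegral.intervalIntegral_pos_of_pos_on (hcont.intervalIntegrable _ _)
      (fun x hx => ?_) ht
    obtain ⟨hy0, hy1⟩ : 0 < t⁻¹ * x ∧ t⁻¹ * x < 1 :=
      ⟨by have := hx.1; positivity, by rw [inv_mul_lt_one₀ ht]; exact hx.2⟩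
    rw [heval]
    have : 0 < 1 - (t⁻¹ * x) ^ 2 := by nlinarith
    have : 0 < sinh (t - x) := sinh_pos_iff.mpr (by linarith [hx.2])
    positivity
  · calc _ ≤ ∫ x in (0 : ℝ)..t, sinh t := by
          refine intervalIntegral.integral_mono_on ht.le (hcont.intervalIntegrable _ _)
            intervalIntegrable_const fun x hx => ?_
          obtain ⟨hy0, hy1⟩ := hy hx.1 hx.2
          rw [heval, ← one_mul (sinh t)]
          refine mul_le_mul (pow_le_one₀ (mul_nonneg (sq_nonneg _) (by nlinarith)) (by nlinarith))
            (sinh_le_sinh.mpr (by linarith [hx.1])) (sinh_nonneg_iff.mpr (by linarith [hx.2]))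
            zero_le_one
      _ = t * sinh t := by simp

theorem exists_int_mul_cosh_sub_mem_Ioc {t : ℝ} (ht : 0 < t) {q : ℚ} (htq : t ^ 2 = q) (n : ℕ) :
    ∃ a b : ℤ, a * cosh t - b ∈ Set.Ioc 0 (((q.den : ℝ) ^ 2 * t ^ 4) ^ n / n ! * (t * sinh t)) := by
  set p := (nivenPoly ℝ n).comp (C t⁻¹ * X)
  have hodd (k : ℕ) (hk : Odd k) : p.coeff k = 0 := by
    simp [p, coeff_nivenPoly_of_odd n hk]
  obtain ⟨a, ha⟩ := exists_den_pow_mul_eval_sumEvenIDeriv_eq (natDegree_nivenPoly_le n)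
    (X_sub_C_pow_dvd_nivenPoly n (r := (0 : ℤ)) (by norm_num)) ht.ne' htq
  obtain ⟨b, hb⟩ := exists_den_pow_mul_eval_sumEvenIDeriv_eq (natDegree_nivenPoly_le n)
    (X_sub_C_pow_dvd_nivenPoly n (r := (1 : ℤ)) (by norm_num)) ht.ne' htq
  simp only [map_nivenPoly, Int.cast_zero, mul_zero, Int.cast_one, mul_one] at ha hb
  have hI := integral_eval_mul_sinh_sub p t
  rw [eval_zero_derivative_sumEvenIDeriv hodd, zero_mul, add_zero] at hI
  set K := ((q.den : ℝ) ^ 2 * t ^ 4) ^ n / (n ! : ℝ)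
  have hK : 0 < K := by positivity
  have hKI : a * cosh t - b = K * ∫ x in (0 : ℝ)..t, p.eval x * sinh (t - x) := by
    have hK' : K * n ! = (q.den : ℝ) ^ (2 * n) * t ^ (2 * (2 * n)) := by
      rw [div_mul_cancel₀ _ (by positivity)]
      ring
    have hn : (n ! : ℝ) ≠ 0 := by positivity
    apply mul_left_cancel₀ hn
    rw [hI]
    linear_combination (-cosh t) * ha + hb -
      ((sumEvenIDeriv p).eval 0 * cosh t - (sumEvenIDeriv p).eval t) * hK'
  obtain ⟨h0, h1⟩ := integral_nivenPoly_comp_mul_sinh_mem_Ioc ht n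
  refine ⟨a, b, ?_⟩
  rw [hKI]
  exact ⟨mul_pos hK h0, mul_le_mul_of_nonneg_left h1 hK.le⟩

theorem irrational_of_forall_exists_int_mul_sub_mem_Ioo {x : ℝ}
    (h : ∀ ε > 0, ∃ a b : ℤ, a * x - b ∈ Set.Ioo 0 ε) : Irrational x := by
  rintro ⟨r, rfl⟩
  obtain ⟨a, b, hpos, hlt⟩ := h (1 / r.den) (by positivity)
  have hden : (0 : ℝ) < r.den := by exact_mod_cast r.den_pos
  have hint : (r.den : ℝ) * (a * r - b) = ((a * r.num - r.den * b : ℤ) : ℝ) := by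
    have hnum : (r : ℝ) * r.den = r.num := by exact_mod_cast r.mul_den_eq_num
    push_cast
    rw [← hnum]
    ring
  have h0 : 0 < a * r.num - r.den * b := by
    exact_mod_cast hint ▸ mul_pos hden hpos
  have h1 : a * r.num - r.den * b < 1 := by
    rw [← Int.cast_lt (R := ℝ), ← hint, Int.cast_one, ← lt_div_iff₀' hden]
    exact hlt
  omega

theorem stmt_18 (t : ℝ) (q : ℚ) (hq : q ≠ 0) (ht : t ^ 2 = (q : ℝ)) :
    Irrational (Real.cosh t) := by
  have habs : 0 < |t| := abs_pos.mpr <| by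
    rintro rfl
    norm_num at ht
    exact hq (by exact_mod_cast ht.symm)
  rw [← cosh_abs]
  refine irrational_of_forall_exists_int_mul_sub_mem_Ioo fun ε hε => ?_
  have hlim := (FloorSemiring.tendsto_pow_div_factorial_atTop ((q.den : ℝ) ^ 2 * |t| ^ 4)).mul_const
    (|t| * sinh |t|)
  rw [zero_mul] at hlim
  obtain ⟨n, hn⟩ := (hlim.eventually_lt_const hε).exists
  obtain ⟨a, b, hpos, hle⟩ := exists_int_mul_cosh_sub_mem_Ioc habs (by rw [sq_abs, ht]) n
  exact ⟨a, b, hpos, hle.trans_lt hn⟩
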